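/- For all m, n ∈ ℤ: P_{2m,n} = Q_{3m+1,n}, and P_{2m+1,n} = Q_{3m+d(n),n}, where d(n) = 2 if f_n = R and d(n) = 3 if f_n = L. -/

import Mathlib

/-! Both `R` and `L` fix `D = C·B·A`, hence so does every `F n`, so `F (n - 1)` commutes with
conjugation by powers of `D`; this settles the even case. For the odd case write
`F n = F (n - 1) ∘ f n`: the relation `B² = 1` gives `R (C·B·C⁻¹) = C`, while
`L (C·B·C⁻¹) = C·B·A·B⁻¹·C⁻¹ = D·A·D⁻¹` shifts the conjugating power of `D` by one. -/

/-- The relators of the presentation ⟨A, B, C | A² = B² = C² = 1⟩. -/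
def rels : Set (FreeGroup (Fin 3)) :=
  {FreeGroup.of 0 * FreeGroup.of 0, FreeGroup.of 1 * FreeGroup.of 1,
   FreeGroup.of 2 * FreeGroup.of 2}

/-- `G` is the group ⟨A, B, C | A² = B² = C² = 1⟩, the free product of three copies of ℤ/2. -/
abbrev G : Type := PresentedGroup rels

def A : G := PresentedGroup.of 0
def B : G := PresentedGroup.of 1
def C : G := PresentedGroup.of 2

/-- The distinguished element `D = C·B·A`. -/
def D : G := C * B * A

lemma Subgroup.mem_of_eq_mul_of_mem {M : Type*} [Group M] (K : Subgroup M) {F f : ℤ → M}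
    (hf : ∀ n, f n ∈ K) (hF0 : F 0 ∈ K) (hF : ∀ n, F n = F (n - 1) * f n) (n : ℤ) :
    F n ∈ K := by
  induction n using Int.induction_on with
  | zero => exact hF0
  | succ k ih =>
    rw [hF, add_sub_cancel_right]
    exact K.mul_mem ih (hf _)
  | pred k ih =>
    rw [eq_mul_inv_of_mul_eq (hF (-k)).symm]
    exact K.mul_mem ih (K.inv_mem (hf _))

lemma map_zpow_mul_mul_inv_of_map_eq {H Φ : Type*} [Group H] [FunLike Φ H H]
    [MonoidHomClass Φ H H] (φ : Φ) {d : H} (hd : φ d = d) (m : ℤ) (x : H) :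
    φ (d ^ m * x * (d ^ m)⁻¹) = d ^ m * φ x * (d ^ m)⁻¹ := by
  rw [map_mul, map_mul, map_inv, map_zpow, hd]

lemma B_mul_B : B * B = 1 :=
  (QuotientGroup.eq_one_iff _).2 (Subgroup.subset_normalClosure (by simp [rels]))

lemma B_inv : B⁻¹ = B :=
  inv_eq_of_mul_eq_one_right B_mul_B

section

variable {R L : MulAut G}

lemma apply_D_of_R (hRA : R A = A) (hRB : R B = B * C * B⁻¹) (hRC : R C = B) : R D = D := by
  simp only [D, map_mul, hRA, hRB, hRC, B_inv]
  rw [← mul_assoc, ← mul_assoc, B_mul_B, one_mul]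

lemma apply_C_mul_B_mul_C_inv_of_R (hRB : R B = B * C * B⁻¹) (hRC : R C = B) :
    R (C * B * C⁻¹) = C := by
  simp only [map_mul, map_inv, hRB, hRC, B_inv, mul_assoc, B_mul_B, mul_one]
  rw [← mul_assoc, B_mul_B, one_mul]

lemma apply_D_of_L (hLA : L A = B) (hLB : L B = B * A * B⁻¹) (hLC : L C = C) : L D = D := by
  simp only [D, map_mul, hLA, hLB, hLC]
  group

lemma apply_C_mul_B_mul_C_inv_of_L (hLB : L B = B * A * B⁻¹) (hLC : L C = C) :
    L (C * B * C⁻¹) = D * A * D⁻¹ := by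
  simp only [D, map_mul, map_inv, hLB, hLC]
  group

end

theorem stmt13_general
    (R L : MulAut G)
    (hRA : R A = A) (hRB : R B = B * C * B⁻¹) (hRC : R C = B)
    (hLA : L A = B) (hLB : L B = B * A * B⁻¹) (hLC : L C = C)
    (P : ℤ → G)
    (hP0 : ∀ m : ℤ, P (3 * m) = D ^ m * A * (D ^ m)⁻¹)
    (hP1 : ∀ m : ℤ, P (3 * m + 1) = D ^ m * B * (D ^ m)⁻¹)
    (hP2 : ∀ m : ℤ, P (3 * m + 2) = D ^ m * C * (D ^ m)⁻¹)
    (f : ℤ → MulAut G) (hfRL : ∀ n : ℤ, f n = R ∨ f n = L)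
    (F : ℤ → MulAut G) (hF0 : F 0 = 1) (hF : ∀ n : ℤ, F n = F (n - 1) * f n)
    (Q : ℤ → ℤ → G) (hQ : ∀ m n : ℤ, Q m n = F (n - 1) (P m))
    (PP : ℤ → ℤ → G)
    (hPPe : ∀ m n : ℤ, PP (2 * m) n = D ^ m * F (n - 1) B * (D ^ m)⁻¹)
    (hPPo : ∀ m n : ℤ, PP (2 * m + 1) n = D ^ m * F n (C * B * C⁻¹) * (D ^ m)⁻¹) :
    ∀ m n : ℤ,
      PP (2 * m) n = Q (3 * m + 1) n ∧
      (f n = R → PP (2 * m + 1) n = Q (3 * m + 2) n) ∧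
      (f n = L → PP (2 * m + 1) n = Q (3 * m + 3) n) := by
  have hfD (n : ℤ) : f n ∈ MulAction.stabilizer (MulAut G) D := by
    rcases hfRL n with h | h <;> rw [h, MulAction.mem_stabilizer_iff, MulAut.smul_def]
    exacts [apply_D_of_R hRA hRB hRC, apply_D_of_L hLA hLB hLC]
  have hFD (n : ℤ) : F n D = D :=
    (MulAction.stabilizer (MulAut G) D).mem_of_eq_mul_of_mem hfD (hF0 ▸ one_mem _) hF n
  intro m n
  have hconj := map_zpow_mul_mul_inv_of_map_eq (F (n - 1)) (hFD (n - 1)) m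
  refine ⟨by rw [hPPe, hQ, hP1, hconj], fun hR => ?_, fun hL => ?_⟩
  · rw [hPPo, hQ, hP2, hconj, hF n, hR, MulAut.mul_apply, apply_C_mul_B_mul_C_inv_of_R hRB hRC]
  · rw [hPPo, hQ, show 3 * m + 3 = 3 * (m + 1) by ring, hP0, hF n, hL, MulAut.mul_apply,
      apply_C_mul_B_mul_C_inv_of_L hLB hLC]
    simp only [map_mul, map_inv, map_zpow, hFD, zpow_add_one]
    group

/-- P_{2m,n} = Q_{3m+1,n} and P_{2m+1,n} = Q_{3m+d(n),n}, where d(n) = 2 if f_n = R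
and d(n) = 3 if f_n = L. -/
theorem stmt13
    (R L : MulAut G)
    (hRA : R A = A) (hRB : R B = B * C * B⁻¹) (hRC : R C = B)
    (hLA : L A = B) (hLB : L B = B * A * B⁻¹) (hLC : L C = C)
    (P : ℤ → G)
    (hP0 : ∀ m : ℤ, P (3 * m) = D ^ m * A * (D ^ m)⁻¹)
    (hP1 : ∀ m : ℤ, P (3 * m + 1) = D ^ m * B * (D ^ m)⁻¹)
    (hP2 : ∀ m : ℤ, P (3 * m + 2) = D ^ m * C * (D ^ m)⁻¹)
    (p : ℤ) (hp : 2 ≤ p)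
    (f : ℤ → MulAut G) (hfRL : ∀ n : ℤ, f n = R ∨ f n = L)
    (hfper : ∀ n : ℤ, f (n + p) = f n) (hf0 : f 0 = L) (hf1 : f 1 = R)
    (F : ℤ → MulAut G) (hF0 : F 0 = 1) (hF : ∀ n : ℤ, F n = F (n - 1) * f n)
    (Q : ℤ → ℤ → G) (hQ : ∀ m n : ℤ, Q m n = F (n - 1) (P m))
    (PP : ℤ → ℤ → G)
    (hPPe : ∀ m n : ℤ, PP (2 * m) n = D ^ m * F (n - 1) B * (D ^ m)⁻¹)
    (hPPo : ∀ m n : ℤ, PP (2 * m + 1) n = D ^ m * F n (C * B * C⁻¹) * (D ^ m)⁻¹) :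
    ∀ m n : ℤ,
      PP (2 * m) n = Q (3 * m + 1) n ∧
      (f n = R → PP (2 * m + 1) n = Q (3 * m + 2) n) ∧
      (f n = L → PP (2 * m + 1) n = Q (3 * m + 3) n) :=
  stmt13_general R L hRA hRB hRC hLA hLB hLC P hP0 hP1 hP2 f hfRL F hF0 hF Q hQ PP hPPe hPPo
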